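/- arXiv:2506.02897 — 3 statements merged into one kernel-verified Lean document; each statement's English description precedes it below -/
import Mathlib

section
/- Let η, c, L, M > 0 and ℓ* ∈ ℝ. Let ℓ : ℕ → ℝ and g : ℕ → ℝ be sequences with ℓ(t) ≥ ℓ* and g(t) ≥ 0 for all t, satisfying ℓ(t+1) ≤ ℓ(t) − η c g(t) + L η² M / 2 for all t ∈ ℕ. Then limsup_{T→∞} (1/T) Σ_{t=0}^{T−1} g(t) ≤ L η M / (2c). -/
open Filter Finset

/- Summing the descent inequality telescopes the losses: `a ∑_{t<T} g t ≤ ℓ 0 - ℓ T + T b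
≤ (ℓ 0 - ℓ*) + T b`. Dividing by `a T`, the time average of `g` is at most
`(ℓ 0 - ℓ*) / (a T) + b / a`, whose limit is `b / a = LηM/(2c)` for `a = ηc`, `b = Lη²M/2`. -/

theorem Filter.limsup_le_of_eventually_le_div_add {u : ℕ → ℝ} {C K : ℝ}
    (hbdd : IsBoundedUnder (· ≥ ·) atTop u) (h : ∀ᶠ T in atTop, u T ≤ C / T + K) :
    limsup u atTop ≤ K := by
  have htend : Tendsto (fun T : ℕ => C / T + K) atTop (nhds K) := by
    simpa using (tendsto_const_nhds.div_atTop tendsto_natCast_atTop_atTop).add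
      (tendsto_const_nhds (x := K))
  calc limsup u atTop ≤ limsup (fun T : ℕ => C / T + K) atTop :=
        limsup_le_limsup h hbdd.isCoboundedUnder_le htend.isBoundedUnder_le
    _ = K := htend.limsup_eq

section Descent

variable {a b lstar : ℝ} {ℓ g : ℕ → ℝ}

theorem mul_sum_range_le_of_descent (hdesc : ∀ t, ℓ (t + 1) ≤ ℓ t - a * g t + b) (T : ℕ) :
    a * ∑ t ∈ range T, g t ≤ ℓ 0 - ℓ T + T * b :=
  calc a * ∑ t ∈ range T, g t = ∑ t ∈ range T, a * g t := mul_sum _ _ _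
    _ ≤ ∑ t ∈ range T, (ℓ t - ℓ (t + 1) + b) :=
        sum_le_sum fun t _ => by linarith [hdesc t]
    _ = ℓ 0 - ℓ T + T * b := by
        rw [sum_add_distrib, sum_range_sub', sum_const, card_range, nsmul_eq_mul]

theorem average_le_of_descent (ha : 0 < a) (hlb : ∀ t, lstar ≤ ℓ t)
    (hdesc : ∀ t, ℓ (t + 1) ≤ ℓ t - a * g t + b) {T : ℕ} (hT : 0 < T) :
    (1 / (T : ℝ)) * ∑ t ∈ range T, g t ≤ (ℓ 0 - lstar) / a / T + b / a := by
  have hT' : (0 : ℝ) < T := Nat.cast_pos.mpr hT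
  have hsum : a * ∑ t ∈ range T, g t ≤ (ℓ 0 - lstar) + T * b := by
    linarith [mul_sum_range_le_of_descent hdesc T, hlb T]
  calc (1 / (T : ℝ)) * ∑ t ∈ range T, g t = (a * ∑ t ∈ range T, g t) / (a * T) := by
        field_simp
    _ ≤ ((ℓ 0 - lstar) + T * b) / (a * T) := by gcongr
    _ = (ℓ 0 - lstar) / a / T + b / a := by field_simp

theorem limsup_average_le_of_descent (ha : 0 < a) (hlb : ∀ t, lstar ≤ ℓ t) (hg : ∀ t, 0 ≤ g t)
    (hdesc : ∀ t, ℓ (t + 1) ≤ ℓ t - a * g t + b) :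
    limsup (fun T : ℕ => (1 / (T : ℝ)) * ∑ t ∈ range T, g t) atTop ≤ b / a := by
  -- `limsup` on `ℝ` is a junk value for sequences unbounded below
  have hnonneg : IsBoundedUnder (· ≥ ·) atTop fun T : ℕ => (1 / (T : ℝ)) * ∑ t ∈ range T, g t :=
    isBoundedUnder_of ⟨0, fun T => mul_nonneg (by positivity) (sum_nonneg fun t _ => hg t)⟩
  exact limsup_le_of_eventually_le_div_add hnonneg
    ((eventually_gt_atTop 0).mono fun T hT => average_le_of_descent ha hlb hdesc hT)

end Descent

theorem time_average_limsup_bound_general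
    (η c L M : ℝ) (hη : 0 < η) (hc : 0 < c)
    (lstar : ℝ) (ℓ g : ℕ → ℝ)
    (hlb : ∀ t, lstar ≤ ℓ t) (hg : ∀ t, 0 ≤ g t)
    (hdesc : ∀ t, ℓ (t + 1) ≤ ℓ t - η * c * g t + L * η ^ 2 * M / 2) :
    limsup (fun T : ℕ => (1 / (T : ℝ)) * ∑ t ∈ Finset.range T, g t) atTop ≤
      L * η * M / (2 * c) := by
  have hbound := limsup_average_le_of_descent (mul_pos hη hc) hlb hg hdesc
  have hratio : L * η ^ 2 * M / 2 / (η * c) = L * η * M / (2 * c) := by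
    field_simp
  rwa [hratio] at hbound

/-- Asymptotic conclusion of Proposition A3: under the per-round
descent inequality `ℓ(t+1) ≤ ℓ(t) − ηc g(t) + Lη²M/2` with `ℓ ≥ ℓ*` and `g ≥ 0`,
the time averages of `g` satisfy `limsup_{T→∞} (1/T) Σ_{t<T} g(t) ≤ LηM/(2c)`. -/
theorem time_average_limsup_bound
    (η c L M : ℝ) (hη : 0 < η) (hc : 0 < c) (hL : 0 < L) (hM : 0 < M)
    (lstar : ℝ) (ℓ g : ℕ → ℝ)
    (hlb : ∀ t, lstar ≤ ℓ t) (hg : ∀ t, 0 ≤ g t)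
    (hdesc : ∀ t, ℓ (t + 1) ≤ ℓ t - η * c * g t + L * η ^ 2 * M / 2) :
    limsup (fun T : ℕ => (1 / (T : ℝ)) * ∑ t ∈ Finset.range T, g t) atTop ≤
      L * η * M / (2 * c) :=
  time_average_limsup_bound_general η c L M hη hc lstar ℓ g hlb hg hdesc
end

section
/- Let f : ℝ^D → ℝ be differentiable with L-Lipschitz gradient (L > 0) and bounded below by f* ∈ ℝ, and let c, M, η > 0. Let θ : ℕ → ℝ^D and g : ℕ → ℝ^D be sequences with θ(t+1) = θ(t) − η g(t), ⟨g(t), ∇f(θ(t))⟩ ≥ c‖∇f(θ(t))‖², and ‖g(t)‖² ≤ M for all t ∈ ℕ. Then for every positive integer T, (1/T) Σ_{t=0}^{T−1} ‖∇f(θ(t))‖² ≤ (f(θ(0)) − f*)/(η c T) + L η M / (2c); in particular limsup_{T→∞} (1/T) Σ_{t=0}^{T−1} ‖∇f(θ(t))‖² ≤ L η M / (2c). -/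
open Filter
open scoped RealInnerProductSpace

/-!
The `L`-Lipschitz gradient gives the descent lemma
`f (x + v) ≤ f x + ⟪∇f x, v⟫ + L/2 ‖v‖²`. Applied to the step `v = -η g(t)`, alignment and the
bound on `‖g(t)‖²` turn it into `f(θ(t+1)) ≤ f(θ(t)) - ηc‖∇f(θ(t))‖² + Lη²M/2`. Summing over
`t < T` telescopes, and `f ≥ f*` bounds `f(θ(0)) - f(θ(T))`; dividing by `ηcT` gives the averaged
bound, whose first term vanishes as `T → ∞`.
-/

section Descent

variable {E : Type*} [NormedAddCommGroup E] [InnerProductSpace ℝ E] [CompleteSpace E]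
  {f : E → ℝ} {L : ℝ}

theorem HasGradientAt.hasDerivAt_comp_add_smul {f' x v : E} {s : ℝ}
    (h : HasGradientAt f f' (x + s • v)) :
    HasDerivAt (fun s : ℝ => f (x + s • v)) ⟪f', v⟫ s := by
  have hline : HasDerivAt (fun s : ℝ => x + s • v) v s := by
    simpa using ((hasDerivAt_id s).smul_const v).const_add x
  have hcomp : HasDerivAt (fun s : ℝ => f (x + s • v)) (InnerProductSpace.toDual ℝ E f' v) s :=
    h.hasFDerivAt.comp_hasDerivAt s hline
  rwa [InnerProductSpace.toDual_apply_apply] at hcomp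

theorem inner_gradient_add_smul_sub_le
    (hlip : ∀ x y, ‖gradient f x - gradient f y‖ ≤ L * ‖x - y‖) (x v : E) {s : ℝ}
    (hs : 0 ≤ s) :
    ⟪gradient f (x + s • v), v⟫ - ⟪gradient f x, v⟫ ≤ L * ‖v‖ ^ 2 * s := by
  have hgrad : ‖gradient f (x + s • v) - gradient f x‖ ≤ L * (s * ‖v‖) := by
    simpa [norm_smul, abs_of_nonneg hs] using hlip (x + s • v) x
  calc ⟪gradient f (x + s • v), v⟫ - ⟪gradient f x, v⟫
      = ⟪gradient f (x + s • v) - gradient f x, v⟫ := (inner_sub_left _ _ _).symm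
    _ ≤ ‖gradient f (x + s • v) - gradient f x‖ * ‖v‖ := real_inner_le_norm _ _
    _ ≤ L * (s * ‖v‖) * ‖v‖ := by gcongr
    _ = L * ‖v‖ ^ 2 * s := by ring

theorem descent_lemma (hdiff : Differentiable ℝ f)
    (hlip : ∀ x y, ‖gradient f x - gradient f y‖ ≤ L * ‖x - y‖) (x v : E) :
    f (x + v) ≤ f x + ⟪gradient f x, v⟫ + L / 2 * ‖v‖ ^ 2 := by
  -- the gap between the quadratic upper model and `f` along `s ↦ x + s • v` grows for `s ≥ 0`
  set gap : ℝ → ℝ := fun s =>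
    f x + s * ⟪gradient f x, v⟫ + L * ‖v‖ ^ 2 * s ^ 2 / 2 - f (x + s • v)
  have hgap : ∀ s, HasDerivAt gap
      (⟪gradient f x, v⟫ + L * ‖v‖ ^ 2 * s - ⟪gradient f (x + s • v), v⟫) s := by
    intro s
    have hmodel : HasDerivAt (fun s : ℝ => f x + s * ⟪gradient f x, v⟫ + L * ‖v‖ ^ 2 * s ^ 2 / 2)
        (⟪gradient f x, v⟫ + L * ‖v‖ ^ 2 * s) s :=
      ((((hasDerivAt_id' s).mul_const _).const_add _).add
        (((hasDerivAt_pow 2 s).const_mul _).div_const 2)).congr_deriv (by norm_num; ring)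
    exact hmodel.sub (hdiff _).hasGradientAt.hasDerivAt_comp_add_smul
  have hmono : MonotoneOn gap (Set.Ici 0) := by
    refine monotoneOn_of_hasDerivWithinAt_nonneg (convex_Ici 0)
      (fun s _ => (hgap s).continuousAt.continuousWithinAt)
      (fun s _ => (hgap s).hasDerivWithinAt) fun s hs => ?_
    rw [interior_Ici] at hs
    linarith [inner_gradient_add_smul_sub_le hlip x v (le_of_lt hs)]
  have h01 : gap 0 ≤ gap 1 := hmono (Set.mem_Ici.2 le_rfl) (Set.mem_Ici.2 zero_le_one) zero_le_one
  norm_num [gap, -inner_gradient_left] at h01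
  linarith

theorem gradient_step_le (hdiff : Differentiable ℝ f)
    (hlip : ∀ x y, ‖gradient f x - gradient f y‖ ≤ L * ‖x - y‖) (hL : 0 ≤ L)
    {c M η : ℝ} (hη : 0 ≤ η) {x d : E} (halign : c * ‖gradient f x‖ ^ 2 ≤ ⟪d, gradient f x⟫)
    (hbound : ‖d‖ ^ 2 ≤ M) :
    f (x - η • d) ≤ f x - η * c * ‖gradient f x‖ ^ 2 + L * η ^ 2 * M / 2 := by
  have hdesc := descent_lemma hdiff hlip x (-(η • d))
  rw [← sub_eq_add_neg, inner_neg_right, real_inner_smul_right, real_inner_comm, norm_neg,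
    norm_smul, mul_pow, Real.norm_eq_abs, sq_abs] at hdesc
  have hdecrease := mul_le_mul_of_nonneg_left halign hη
  have hcurvature := mul_le_mul_of_nonneg_left hbound (by positivity : 0 ≤ L / 2 * η ^ 2)
  linarith

end Descent

theorem sum_range_le_of_le_sub_add {a b : ℕ → ℝ} {K : ℝ} (h : ∀ t, a (t + 1) ≤ a t - b t + K)
    (T : ℕ) : ∑ t ∈ Finset.range T, b t ≤ a 0 - a T + T * K := by
  have hterm : ∀ t ∈ Finset.range T, b t ≤ (a t - a (t + 1)) + K := fun t _ => by
    linarith [h t]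
  calc ∑ t ∈ Finset.range T, b t ≤ ∑ t ∈ Finset.range T, ((a t - a (t + 1)) + K) :=
        Finset.sum_le_sum hterm
    _ = a 0 - a T + T * K := by
        rw [Finset.sum_add_distrib, Finset.sum_range_sub', Finset.sum_const, Finset.card_range,
          nsmul_eq_mul]

theorem limsup_le_of_le_div_add {u : ℕ → ℝ} (hu : 0 ≤ u) {C B : ℝ}
    (h : ∀ T : ℕ, 0 < T → u T ≤ C / T + B) : limsup u atTop ≤ B := by
  have hlim : Tendsto (fun T : ℕ => C / T + B) atTop (nhds B) := by
    simpa using (tendsto_const_div_atTop_nhds_zero_nat C).add_const B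
  calc limsup u atTop ≤ limsup (fun T : ℕ => C / T + B) atTop :=
        limsup_le_limsup ((eventually_gt_atTop 0).mono h)
          (isBoundedUnder_of ⟨0, hu⟩).isCoboundedUnder_le hlim.isBoundedUnder_le
    _ = B := hlim.limsup_eq

theorem fedcvr_convergence_general
    (D : ℕ) (f : EuclideanSpace ℝ (Fin D) → ℝ)
    (L c M η : ℝ) (hL : 0 < L) (hc : 0 < c) (hη : 0 < η)
    (fstar : ℝ) (hbelow : ∀ x, fstar ≤ f x)
    (hdiff : Differentiable ℝ f)
    (hlip : ∀ x y, ‖gradient f x - gradient f y‖ ≤ L * ‖x - y‖)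
    (θ g : ℕ → EuclideanSpace ℝ (Fin D))
    (hupd : ∀ t, θ (t + 1) = θ t - η • g t)
    (halign : ∀ t, c * ‖gradient f (θ t)‖ ^ 2 ≤ ⟪g t, gradient f (θ t)⟫)
    (hbound : ∀ t, ‖g t‖ ^ 2 ≤ M) :
    (∀ T : ℕ, 0 < T →
      (1 / (T : ℝ)) * ∑ t ∈ Finset.range T, ‖gradient f (θ t)‖ ^ 2 ≤
        (f (θ 0) - fstar) / (η * c * T) + L * η * M / (2 * c)) ∧
    limsup (fun T : ℕ =>
        (1 / (T : ℝ)) * ∑ t ∈ Finset.range T, ‖gradient f (θ t)‖ ^ 2) atTop ≤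
      L * η * M / (2 * c) := by
  have hsum : ∀ T : ℕ, ∑ t ∈ Finset.range T, η * c * ‖gradient f (θ t)‖ ^ 2 ≤
      f (θ 0) - f (θ T) + T * (L * η ^ 2 * M / 2) :=
    sum_range_le_of_le_sub_add (a := fun t => f (θ t)) fun t => hupd t ▸
      gradient_step_le hdiff hlip hL.le hη.le (halign t) (hbound t)
  have havg : ∀ T : ℕ, 0 < T →
      (1 / (T : ℝ)) * ∑ t ∈ Finset.range T, ‖gradient f (θ t)‖ ^ 2 ≤
        (f (θ 0) - fstar) / (η * c * T) + L * η * M / (2 * c) := by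
    intro T hT
    calc (1 / (T : ℝ)) * ∑ t ∈ Finset.range T, ‖gradient f (θ t)‖ ^ 2
        ≤ (1 / (T : ℝ)) * ((f (θ 0) - fstar + T * (L * η ^ 2 * M / 2)) / (η * c)) := by
          gcongr
          rw [le_div_iff₀ (by positivity), mul_comm, Finset.mul_sum]
          linarith [hsum T, hbelow (θ T)]
      _ = (f (θ 0) - fstar) / (η * c * T) + L * η * M / (2 * c) := by
          field_simp
  refine ⟨havg, limsup_le_of_le_div_add (C := (f (θ 0) - fstar) / (η * c))
    (fun T => by positivity) fun T hT => ?_⟩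
  simpa only [div_div] using havg T hT

/-- Deterministic form of Proposition A3 (convergence of
FedCVR-Bolt): for `f` differentiable with `L`-Lipschitz gradient and bounded below
by `f*`, and iterates `θ(t+1) = θ(t) − η g(t)` with aligned, bounded update
directions, the time-averaged squared gradient norms satisfy
`(1/T) Σ_{t<T} ‖∇f(θ(t))‖² ≤ (f(θ(0)) − f*)/(ηcT) + LηM/(2c)` for every `T > 0`,
and in particular `limsup_{T→∞} (1/T) Σ_{t<T} ‖∇f(θ(t))‖² ≤ LηM/(2c)`. -/
theorem fedcvr_convergence
    (D : ℕ) (f : EuclideanSpace ℝ (Fin D) → ℝ)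
    (L c M η : ℝ) (hL : 0 < L) (hc : 0 < c) (hM : 0 < M) (hη : 0 < η)
    (fstar : ℝ) (hbelow : ∀ x, fstar ≤ f x)
    (hdiff : Differentiable ℝ f)
    (hlip : ∀ x y, ‖gradient f x - gradient f y‖ ≤ L * ‖x - y‖)
    (θ g : ℕ → EuclideanSpace ℝ (Fin D))
    (hupd : ∀ t, θ (t + 1) = θ t - η • g t)
    (halign : ∀ t, c * ‖gradient f (θ t)‖ ^ 2 ≤ ⟪g t, gradient f (θ t)⟫)
    (hbound : ∀ t, ‖g t‖ ^ 2 ≤ M) :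
    (∀ T : ℕ, 0 < T →
      (1 / (T : ℝ)) * ∑ t ∈ Finset.range T, ‖gradient f (θ t)‖ ^ 2 ≤
        (f (θ 0) - fstar) / (η * c * T) + L * η * M / (2 * c)) ∧
    limsup (fun T : ℕ =>
        (1 / (T : ℝ)) * ∑ t ∈ Finset.range T, ‖gradient f (θ t)‖ ^ 2) atTop ≤
      L * η * M / (2 * c) :=
  fedcvr_convergence_general D f L c M η hL hc hη fstar hbelow hdiff hlip θ g hupd halign hbound
end

section
/- Let (Ω, F, P) be a probability space, K a positive integer, X : Ω → ℝ^K a square-integrable random vector with E[X_i] = 0 for all i and positive definite covariance matrix C, α ∈ ℝ^K, and A a nonempty subset of {1,…,K}. Then Var(αᵀX) − E[(αᵀX − β̂ᵀX)²] = (Cα)_Aᵀ (C_{AA})^{-1} (Cα)_A, where β̂ ∈ ℝ^K is defined by β̂_A = (C_{AA})^{-1}(Cα)_A on coordinates in A and β̂_k = 0 for k ∉ A. -/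
/-! For a centred vector `X` with second-moment matrix `C`, the variance of `uᵀX` and the mean
square of `uᵀX` are both the quadratic form `uᵀCu`, so the claim is an identity between quadratic
forms in `C`. Expanding `(α - β̂)ᵀC(α - β̂)`, the normal equations `C_AA β̂_A = (Cα)_A` turn both
the cross term `β̂ᵀCα` and `β̂ᵀCβ̂` into `(Cα)_Aᵀ C_AA⁻¹ (Cα)_A`, since `β̂` vanishes off `A`. -/

namespace Matrix

variable {ι R : Type*} [Fintype ι] [CommRing R] {s : Finset ι}

theorem dotProduct_eq_dotProduct_restrict {u : ι → R} (hu : ∀ k ∉ s, u k = 0) (z : ι → R) :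
    u ⬝ᵥ z = (fun i : s => u i) ⬝ᵥ fun i : s => z i := by
  rw [dotProduct, dotProduct, Finset.sum_coe_sort s (fun k => u k * z k)]
  exact (Finset.sum_subset (Finset.subset_univ s) fun k _ hk => by rw [hu k hk, zero_mul]).symm

theorem mulVec_restrict {w : ι → R} (hw : ∀ k ∉ s, w k = 0) (M : Matrix ι ι R) (i : s) :
    (M *ᵥ w) i = (M.submatrix Subtype.val Subtype.val *ᵥ fun j : s => w j) i := by
  rw [mulVec, dotProduct_comm, dotProduct_eq_dotProduct_restrict hw, dotProduct_comm]
  rfl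

theorem dotProduct_mulVec_restrict {u w : ι → R} (hu : ∀ k ∉ s, u k = 0)
    (hw : ∀ k ∉ s, w k = 0) (M : Matrix ι ι R) :
    u ⬝ᵥ (M *ᵥ w) =
      (fun i : s => u i) ⬝ᵥ (M.submatrix Subtype.val Subtype.val *ᵥ fun j : s => w j) := by
  rw [dotProduct_eq_dotProduct_restrict hu]
  exact congrArg _ (funext (mulVec_restrict hw M))

/-- `hβ` says that `β_s` solves the least-squares normal equations `M_ss β_s = (M α)_s`. -/
theorem IsSymm.dotProduct_mulVec_sub_of_normal_eq [DecidableEq ι] {M : Matrix ι ι R} (hM : M.IsSymm)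
    (hdet : IsUnit (M.submatrix Subtype.val Subtype.val : Matrix s s R).det) (α β : ι → R)
    (hβs : ∀ k ∉ s, β k = 0)
    (hβ : (fun i : s => β i) =
      (M.submatrix Subtype.val Subtype.val)⁻¹ *ᵥ fun i : s => (M *ᵥ α) i) :
    (α - β) ⬝ᵥ (M *ᵥ (α - β)) =
      α ⬝ᵥ (M *ᵥ α) - (fun i : s => (M *ᵥ α) i) ⬝ᵥ
        ((M.submatrix Subtype.val Subtype.val)⁻¹ *ᵥ fun i : s => (M *ᵥ α) i) := by
  set D := M.submatrix (Subtype.val : s → ι) Subtype.val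
  set v : s → R := fun i => (M *ᵥ α) i
  have hcross : β ⬝ᵥ (M *ᵥ α) = v ⬝ᵥ (D⁻¹ *ᵥ v) := by
    rw [dotProduct_eq_dotProduct_restrict hβs, hβ, dotProduct_comm]
  have hsymm : α ⬝ᵥ (M *ᵥ β) = β ⬝ᵥ (M *ᵥ α) := by
    rw [dotProduct_mulVec, ← mulVec_transpose, hM.eq, dotProduct_comm]
  have hquad : β ⬝ᵥ (M *ᵥ β) = v ⬝ᵥ (D⁻¹ *ᵥ v) := by
    rw [dotProduct_mulVec_restrict hβs hβs, hβ, mulVec_mulVec, mul_nonsing_inv D hdet,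
      one_mulVec, dotProduct_comm]
  rw [mulVec_sub, sub_dotProduct, dotProduct_sub, dotProduct_sub, hsymm, hcross, hquad]
  ring

end Matrix

namespace ProbabilityTheory

open Matrix MeasureTheory

variable {Ω ι : Type*} [MeasurableSpace Ω] {μ : Measure Ω} [Fintype ι] {X : ι → Ω → ℝ}
  {C : Matrix ι ι ℝ}

theorem integral_sum_mul_sum_eq_dotProduct_mulVec (hX : ∀ k, MemLp (X k) 2 μ)
    (hC : ∀ k j, C k j = ∫ ω, X k ω * X j ω ∂μ) (u w : ι → ℝ) :
    ∫ ω, (∑ k, u k * X k ω) * (∑ j, w j * X j ω) ∂μ = u ⬝ᵥ (C *ᵥ w) := by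
  have hint : ∀ k j, Integrable (fun ω => u k * w j * (X k ω * X j ω)) μ := fun k j =>
    ((hX k).integrable_mul (hX j)).const_mul _
  calc ∫ ω, (∑ k, u k * X k ω) * (∑ j, w j * X j ω) ∂μ
      = ∫ ω, ∑ k, ∑ j, u k * w j * (X k ω * X j ω) ∂μ := by
        congr 1 with ω
        rw [Finset.sum_mul_sum]
        exact Finset.sum_congr rfl fun k _ => Finset.sum_congr rfl fun j _ => by ring
    _ = ∑ k, ∑ j, u k * w j * C k j := by
        rw [integral_finsetSum _ fun k _ => integrable_finsetSum _ fun j _ => hint k j]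
        refine Finset.sum_congr rfl fun k _ => ?_
        rw [integral_finsetSum _ fun j _ => hint k j]
        simp only [integral_const_mul, hC]
    _ = u ⬝ᵥ (C *ᵥ w) := by
        simp only [dotProduct, mulVec, Finset.mul_sum]
        exact Finset.sum_congr rfl fun k _ => Finset.sum_congr rfl fun j _ => by ring

theorem integral_sum_sq_eq_dotProduct_mulVec (hX : ∀ k, MemLp (X k) 2 μ)
    (hC : ∀ k j, C k j = ∫ ω, X k ω * X j ω ∂μ) (u : ι → ℝ) :
    ∫ ω, (∑ k, u k * X k ω) ^ 2 ∂μ = u ⬝ᵥ (C *ᵥ u) := by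
  simp only [sq]
  exact integral_sum_mul_sum_eq_dotProduct_mulVec hX hC u u

theorem variance_sum_eq_dotProduct_mulVec [IsFiniteMeasure μ] (hX : ∀ k, MemLp (X k) 2 μ)
    (hmean : ∀ k, ∫ ω, X k ω ∂μ = 0) (hC : ∀ k j, C k j = ∫ ω, X k ω * X j ω ∂μ)
    (u : ι → ℝ) :
    variance (fun ω => ∑ k, u k * X k ω) μ = u ⬝ᵥ (C *ᵥ u) := by
  have hmeas : AEMeasurable (fun ω => ∑ k, u k * X k ω) μ :=
    Finset.aemeasurable_fun_sum _ fun k _ => ((hX k).aestronglyMeasurable.aemeasurable).const_mul _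
  have hzero : ∫ ω, ∑ k, u k * X k ω ∂μ = 0 := by
    rw [integral_finsetSum _ fun k _ => ((hX k).integrable one_le_two).const_mul _]
    simp [integral_const_mul, hmean]
  rw [variance_of_integral_eq_zero hmeas hzero, integral_sum_sq_eq_dotProduct_mulVec hX hC]

end ProbabilityTheory

open Matrix MeasureTheory ProbabilityTheory

theorem variance_reduction_prob_general
    {Ω : Type*} [MeasurableSpace Ω] (μ : Measure Ω) [IsProbabilityMeasure μ]
    (K : ℕ)
    (X : Fin K → Ω → ℝ)
    (hX : ∀ k, MemLp (X k) 2 μ)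
    (hmean : ∀ k, ∫ ω, X k ω ∂μ = 0)
    (C : Matrix (Fin K) (Fin K) ℝ)
    (hC : ∀ k j, C k j = ∫ ω, X k ω * X j ω ∂μ)
    (hPD : C.PosDef)
    (α : Fin K → ℝ) (A : Finset (Fin K))
    (βhat : Fin K → ℝ)
    (hβhat : ∀ k : Fin K, βhat k =
      if h : k ∈ A then
        ((C.submatrix (fun i : {x // x ∈ A} => i.1) (fun j : {x // x ∈ A} => j.1))⁻¹ *ᵥ
          fun i : {x // x ∈ A} => (C *ᵥ α) i.1) ⟨k, h⟩
      else 0) :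
    variance (fun ω => ∑ k, α k * X k ω) μ -
        ∫ ω, ((∑ k, α k * X k ω) - ∑ k, βhat k * X k ω) ^ 2 ∂μ =
      (fun i : {x // x ∈ A} => (C *ᵥ α) i.1) ⬝ᵥ
        ((C.submatrix (fun i : {x // x ∈ A} => i.1) (fun j : {x // x ∈ A} => j.1))⁻¹ *ᵥ
          fun i : {x // x ∈ A} => (C *ᵥ α) i.1) := by
  have hβs : ∀ k ∉ A, βhat k = 0 := fun k hk => by rw [hβhat k, dif_neg hk]
  have hβ : (fun i : A => βhat i) = _ := funext fun i => by rw [hβhat i, dif_pos i.2]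
  have hdet : IsUnit (C.submatrix (Subtype.val : A → Fin K) Subtype.val).det :=
    (isUnit_iff_isUnit_det _).mp (hPD.submatrix Subtype.val_injective).isUnit
  have hresidual : ∀ ω, (∑ k, α k * X k ω) - ∑ k, βhat k * X k ω =
      ∑ k, (α - βhat) k * X k ω := fun ω => by
    simp only [← Finset.sum_sub_distrib, Pi.sub_apply, sub_mul]
  simp only [hresidual]
  rw [variance_sum_eq_dotProduct_mulVec hX hmean hC, integral_sum_sq_eq_dotProduct_mulVec hX hC,
    (isHermitian_iff_isSymm.mp hPD.1).dotProduct_mulVec_sub_of_normal_eq hdet α βhat hβs hβ]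
  ring

/-- Probabilistic form of Proposition 2: for a zero-mean
square-integrable random vector `X` with positive definite covariance `C`, the
variance reduction on the global model `αᵀX` achieved by the best linear predictor
`β̂ᵀX` based on the coordinates in `A` (where `β̂_A = (C_AA)⁻¹(Cα)_A`, `β̂ = 0`
outside `A`) equals `(Cα)_Aᵀ (C_AA)⁻¹ (Cα)_A`. -/
theorem variance_reduction_prob
    {Ω : Type*} [MeasurableSpace Ω] (μ : Measure Ω) [IsProbabilityMeasure μ]
    (K : ℕ) (hK : 0 < K)
    (X : Fin K → Ω → ℝ)
    (hX : ∀ k, MemLp (X k) 2 μ)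
    (hmean : ∀ k, ∫ ω, X k ω ∂μ = 0)
    (C : Matrix (Fin K) (Fin K) ℝ)
    (hC : ∀ k j, C k j = ∫ ω, X k ω * X j ω ∂μ)
    (hPD : C.PosDef)
    (α : Fin K → ℝ) (A : Finset (Fin K)) (hA : A.Nonempty)
    (βhat : Fin K → ℝ)
    (hβhat : ∀ k : Fin K, βhat k =
      if h : k ∈ A then
        ((C.submatrix (fun i : {x // x ∈ A} => i.1) (fun j : {x // x ∈ A} => j.1))⁻¹ *ᵥ
          fun i : {x // x ∈ A} => (C *ᵥ α) i.1) ⟨k, h⟩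
      else 0) :
    variance (fun ω => ∑ k, α k * X k ω) μ -
        ∫ ω, ((∑ k, α k * X k ω) - ∑ k, βhat k * X k ω) ^ 2 ∂μ =
      (fun i : {x // x ∈ A} => (C *ᵥ α) i.1) ⬝ᵥ
        ((C.submatrix (fun i : {x // x ∈ A} => i.1) (fun j : {x // x ∈ A} => j.1))⁻¹ *ᵥ
          fun i : {x // x ∈ A} => (C *ᵥ α) i.1) :=
  variance_reduction_prob_general μ K X hX hmean C hC hPD α A βhat hβhat
end
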